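/- Let p, r be indeterminates, W = 16(p^2+4)r^3 + 4(p^2+4)r^2 - 4(19p+41)r - 16p - 199, and let Q_0 = (4r(p^2+4)W, 2(p^2+4)W^2) on the elliptic curve E_{p,r} : y^2 = x^3 + (p^2+4)Wx^2 - 4(19p+41)(p^2+4)W^2x - 4(p^2+4)^2(16p+199)W^3 over Q(p,r). Then the x-coordinate of [2]Q_0 equals 16(p^2+4)^2 r^4 + 8(p^2+4)(19p+41) r^2 + 4(32p^3 + 398p^2 + 128p + 1592) r + 16p^3 + 560p^2 + 1622p + 2477. -/

import Mathlib

open WeierstrassCurve.Affine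

/-- The field `ℚ(p, r)` realized as `RatFunc (RatFunc ℚ)`,
with `p` the inner variable and `r` the outer variable. -/
noncomputable abbrev Kpr : Type := RatFunc (RatFunc ℚ)

noncomputable def pv : Kpr := RatFunc.C RatFunc.X

noncomputable def rv : Kpr := RatFunc.X

/-- `W = 16(p²+4)r³ + 4(p²+4)r² - 4(19p+41)r - 16p - 199`. -/
noncomputable def Wv : Kpr :=
  16 * (pv ^ 2 + 4) * rv ^ 3 + 4 * (pv ^ 2 + 4) * rv ^ 2 - 4 * (19 * pv + 41) * rv -
    16 * pv - 199

/-- The curve `E_{p,r} : y² = x³ + (p²+4)Wx² - 4(19p+41)(p²+4)W²x - 4(p²+4)²(16p+199)W³`. -/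
noncomputable def Epr : WeierstrassCurve.Affine Kpr :=
  { a₁ := 0, a₂ := (pv ^ 2 + 4) * Wv, a₃ := 0,
    a₄ := -4 * (19 * pv + 41) * (pv ^ 2 + 4) * Wv ^ 2,
    a₆ := -4 * (pv ^ 2 + 4) ^ 2 * (16 * pv + 199) * Wv ^ 3 }

/-!
The polynomial `W` is exactly the factor that puts `Q₀` on `E_{p,r}`: the right-hand side of the
equation at `x = 4r(p²+4)W` is `4(p²+4)²W³ · W = y(Q₀)²`. Since `y(Q₀) ≠ 0`, `Q₀` is not
`2`-torsion, and the tangent slope at `Q₀` simplifies to the polynomial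
`λ = 12(p²+4)r² + 2(p²+4)r - (19p+41)`. Hence `x([2]Q₀) = λ² - (p²+4)W - 2·4r(p²+4)W`, which expands
to the stated quartic in `r`.
-/

section

open Polynomial

lemma RatFunc.aeval_X_ne_zero_of_eval_ne_zero {K : Type*} [Field K] {P : K[X]} {a : K}
    (h : P.eval a ≠ 0) : P.aeval (RatFunc.X : RatFunc K) ≠ 0 := by
  rw [RatFunc.aeval_X_left_eq_algebraMap]
  exact RatFunc.algebraMap_ne_zero fun hP => h (by simp [hP])

lemma pv_sq_add_four_ne_zero : pv ^ 2 + 4 ≠ 0 := by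
  have h := RatFunc.aeval_X_ne_zero_of_eval_ne_zero (P := (X ^ 2 + 4 : ℚ[X])) (a := 0) (by simp)
  simp only [map_add, map_pow, aeval_X, map_ofNat] at h
  simpa [pv, map_ofNat] using (_root_.map_ne_zero RatFunc.C).mpr h

lemma Wv_ne_zero : Wv ≠ 0 := by
  -- as a polynomial in `r`, `W` has constant term `-16p - 199 ≠ 0`
  have hc := RatFunc.aeval_X_ne_zero_of_eval_ne_zero (P := (-16 * X - 199 : ℚ[X])) (a := 0)
    (by norm_num)
  simp only [map_sub, map_mul, map_neg, aeval_X, map_ofNat] at hc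
  have h := RatFunc.aeval_X_ne_zero_of_eval_ne_zero (a := 0)
    (P := (16 * (C RatFunc.X ^ 2 + 4) * X ^ 3 + 4 * (C RatFunc.X ^ 2 + 4) * X ^ 2
        - 4 * (19 * C RatFunc.X + 41) * X - 16 * C RatFunc.X - 199 : (RatFunc ℚ)[X]))
    (by
      simp only [eval_sub, eval_add, eval_mul, eval_pow, eval_C, eval_X, eval_ofNat]
      convert hc using 1
      ring)
  simp only [map_add, map_sub, map_mul, map_pow, map_ofNat, aeval_X, aeval_C] at h
  simpa [Wv, pv, rv] using h

end

namespace WeierstrassCurve.Affine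

variable {F : Type*} [Field F] {W : WeierstrassCurve.Affine F} {x y : F}

lemma nonsingular_of_Y_ne_negY (h : W.Equation x y) (hy : y ≠ W.negY x y) : W.Nonsingular x y :=
  (nonsingular_iff x y).mpr ⟨h, Or.inr hy⟩

lemma Y_ne_negY_of_a₁_a₃_eq_zero [NeZero (2 : F)] (ha₁ : W.a₁ = 0) (ha₃ : W.a₃ = 0) (hy : y ≠ 0) :
    y ≠ W.negY x y := by
  rw [negY, ha₁, ha₃]
  intro h
  have h2y : 2 * y = 0 := by linear_combination h
  exact hy ((mul_eq_zero.mp h2y).resolve_left two_ne_zero)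

variable [DecidableEq F]

lemma slope_self_of_a₁_a₃_eq_zero [NeZero (2 : F)] (ha₁ : W.a₁ = 0) (ha₃ : W.a₃ = 0) (hy : y ≠ 0) :
    W.slope x x y y = (3 * x ^ 2 + 2 * W.a₂ * x + W.a₄) / (2 * y) := by
  rw [slope_of_Y_ne rfl (Y_ne_negY_of_a₁_a₃_eq_zero ha₁ ha₃ hy), negY, ha₁, ha₃]
  ring_nf

lemma exists_two_zsmul_some_eq_some (h : W.Nonsingular x y) (hy : y ≠ W.negY x y) {x₂ : F}
    (hx₂ : W.addX x x (W.slope x x y y) = x₂) :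
    ∃ (y₂ : F) (h₂ : W.Nonsingular x₂ y₂), (2 : ℤ) • Point.some x y h = Point.some x₂ y₂ h₂ := by
  subst hx₂
  exact ⟨_, nonsingular_add h h fun hxy => hy hxy.2, by rw [two_zsmul, Point.add_self_of_Y_ne hy]⟩

end WeierstrassCurve.Affine

lemma Q0_y_ne_zero : (2 * (pv ^ 2 + 4) * Wv ^ 2 : Kpr) ≠ 0 :=
  mul_ne_zero (mul_ne_zero two_ne_zero pv_sq_add_four_ne_zero) (pow_ne_zero 2 Wv_ne_zero)

lemma Epr_equation_Q0 : Epr.Equation (4 * rv * (pv ^ 2 + 4) * Wv) (2 * (pv ^ 2 + 4) * Wv ^ 2) := by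
  rw [equation_iff]
  simp only [Epr]
  linear_combination (4 * (pv ^ 2 + 4) ^ 2 * Wv ^ 3) * Wv.eq_1

open Classical in
lemma Epr_slope_Q0 :
    Epr.slope (4 * rv * (pv ^ 2 + 4) * Wv) (4 * rv * (pv ^ 2 + 4) * Wv)
      (2 * (pv ^ 2 + 4) * Wv ^ 2) (2 * (pv ^ 2 + 4) * Wv ^ 2) =
      12 * (pv ^ 2 + 4) * rv ^ 2 + 2 * (pv ^ 2 + 4) * rv - (19 * pv + 41) := by
  rw [slope_self_of_a₁_a₃_eq_zero (W := Epr) rfl rfl Q0_y_ne_zero,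
    div_eq_iff (mul_ne_zero two_ne_zero Q0_y_ne_zero)]
  simp only [Epr]
  ring

open Classical in
/-- The x-coordinate of `[2]Q₀`, where `Q₀ = (4r(p²+4)W, 2(p²+4)W²)`, equals
`16(p²+4)²r⁴ + 8(p²+4)(19p+41)r² + 4(32p³+398p²+128p+1592)r + 16p³+560p²+1622p+2477`. -/
theorem x_of_two_smul_Q0 :
    ∃ (h : Epr.Nonsingular (4 * rv * (pv ^ 2 + 4) * Wv) (2 * (pv ^ 2 + 4) * Wv ^ 2))
      (y : Kpr)
      (h2 : Epr.Nonsingular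
        (16 * (pv ^ 2 + 4) ^ 2 * rv ^ 4 + 8 * (pv ^ 2 + 4) * (19 * pv + 41) * rv ^ 2 +
          4 * (32 * pv ^ 3 + 398 * pv ^ 2 + 128 * pv + 1592) * rv +
          16 * pv ^ 3 + 560 * pv ^ 2 + 1622 * pv + 2477) y),
      (2 : ℤ) • (Point.some _ _ h : Epr.Point) = Point.some _ _ h2 := by
  have hy := Y_ne_negY_of_a₁_a₃_eq_zero (W := Epr) (x := 4 * rv * (pv ^ 2 + 4) * Wv) rfl rfl
    Q0_y_ne_zero
  have hQ₀ := nonsingular_of_Y_ne_negY Epr_equation_Q0 hy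
  refine ⟨hQ₀, exists_two_zsmul_some_eq_some hQ₀ hy ?_⟩
  rw [addX, Epr_slope_Q0]
  simp only [Epr, Wv]
  ring
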